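/- Let t₀ ≥ 0 and let A : [t₀,∞) → (0,∞) be continuous with ∫_{t₀}^∞ A(t) dt = ∞. Then for every a > 0 there exists a unique b ∈ ℝ such that the solution Θ of Θ'' = AΘ on [t₀,∞) with Θ(t₀) = a and Θ'(t₀) = b is bounded; this bounded solution is strictly positive, strictly decreasing, and tends to 0 at infinity. Moreover, for every b' > b the solution with initial conditions Θ(t₀) = a, Θ'(t₀) = b' tends to +∞ at infinity, and for every b' < b it tends to −∞ at infinity. -/

import Mathlib

open MeasureTheory Filter Set

/-- `Θ`, with derivative `Θ'`, solves the second order linear ODE `Θ'' = A Θ` on the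
half-line `[t₀, ∞)` (derivatives at the endpoint `t₀` are one-sided). -/
def IsSolOn (t₀ : ℝ) (A Θ Θ' : ℝ → ℝ) : Prop :=
  ∀ t ∈ Set.Ici t₀,
    HasDerivWithinAt Θ (Θ' t) (Set.Ici t₀) t ∧
    HasDerivWithinAt Θ' (A t * Θ t) (Set.Ici t₀) t

/-!
The product `Θ Θ'` of a solution and its derivative is nondecreasing, its derivative being
`Θ'² + A Θ²`. So either `Θ Θ' ≤ 0` throughout, and then `Θ²` is nonincreasing and `Θ` is
bounded, or `Θ Θ'` becomes positive; from then on `|Θ|` is bounded away from `0`, and since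
`∫ A = ∞` the equation `Θ'' = A Θ` drives `Θ'`, hence `Θ`, to `±∞`. The difference of two
solutions with the same initial value starts at `0` with the sign of the difference of the
slopes, so it tends to `±∞`: slopes above that of a bounded solution lead to `+∞`, slopes
below it to `-∞`.

The critical slope is located without an existence theorem, as the gap between the slopes
leading to `-∞` and those leading to `+∞`. By continuous dependence on the initial data
(Grönwall), a solution reaching a point with `Θ, Θ' > 0` drags all nearby ones along, so
neither set accumulates at the other; the first is bounded above by `0`, the second below
because a very negative slope forces a sign change before `t₀ + 1`.

A bounded solution is positive: a zero would be a double zero, impossible by uniqueness.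
Its slope is then negative, and it tends to `0`, since otherwise `∫ A Θ = ∞` would make
`Θ'` positive.
-/

open Topology

theorem tendsto_intervalIntegral_atTop_of_setLIntegral_eq_top {f : ℝ → ℝ} {a : ℝ}
    (hf : ContinuousOn f (Ici a)) (hf₀ : ∀ x ≥ a, 0 ≤ f x)
    (htop : ∫⁻ x in Ici a, ENNReal.ofReal (f x) = ⊤) :
    Tendsto (fun T => ∫ x in a..T, f x) atTop atTop := by
  have hlim := (aecover_Ici_of_Ico (μ := volume) (B := a) (d := fun T => T) tendsto_id
    ).lintegral_tendsto_of_countably_generated (hf.aemeasurable measurableSet_Ici).ennreal_ofReal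
  rw [htop] at hlim
  refine ENNReal.tendsto_ofReal_nhds_top.1 (hlim.congr' ?_)
  filter_upwards [eventually_ge_atTop a] with T hT
  rw [Measure.restrict_restrict measurableSet_Ico, inter_eq_left.2 Ico_subset_Ici_self,
    intervalIntegral.integral_of_le hT, ofReal_integral_eq_lintegral_ofReal,
    Measure.restrict_congr_set Ico_ae_eq_Ioc]
  · exact ((hf.mono Icc_subset_Ici_self).integrableOn_Icc).mono_set Ioc_subset_Icc_self
  · exact ae_restrict_of_forall_mem measurableSet_Ioc fun x hx => hf₀ x hx.1.le

theorem ContinuousOn.intervalIntegrable_of_Ici {f : ℝ → ℝ} {a s t : ℝ}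
    (hf : ContinuousOn f (Ici a)) (hs : a ≤ s) (ht : a ≤ t) : IntervalIntegrable f volume s t :=
  (hf.mono fun _ hx => (le_min hs ht).trans hx.1).intervalIntegrable

theorem tendsto_atTop_of_hasDerivAt_of_tendsto_atTop {f f' : ℝ → ℝ} {s : ℝ}
    (hf : ∀ t > s, HasDerivAt f (f' t) t) (hf' : Tendsto f' atTop atTop) :
    Tendsto f atTop atTop := by
  obtain ⟨T, hT⟩ := eventually_atTop.1 ((hf'.eventually_ge_atTop 1).and (eventually_gt_atTop s))
  have hderiv : ∀ x ∈ interior (Ici T), HasDerivAt f (f' x) x ∧ 1 ≤ f' x := fun x hx => by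
    rw [interior_Ici] at hx
    exact ⟨hf x (hT x hx.le).2, (hT x hx.le).1⟩
  have hgrowth := (convex_Ici T).mul_sub_le_image_sub_of_le_deriv
    (fun x hx => (hf x (hT x hx).2).continuousAt.continuousWithinAt)
    (fun x hx => (hderiv x hx).1.differentiableAt.differentiableWithinAt)
    (fun x hx => (hderiv x hx).1.deriv ▸ (hderiv x hx).2)
  refine tendsto_atTop_mono' atTop (eventually_atTop.2 ⟨T, fun t ht => ?_⟩)
    (tendsto_atTop_add_const_right atTop (f T - T) tendsto_id)
  linarith [hgrowth T self_mem_Ici t ht ht, show id t = t from rfl]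

theorem not_tendsto_atTop_of_abs_le {f : ℝ → ℝ} {t₀ M : ℝ} (hM : ∀ t ≥ t₀, |f t| ≤ M) :
    ¬Tendsto f atTop atTop := fun hf => by
  obtain ⟨t, ht, hlt⟩ := ((eventually_ge_atTop t₀).and (hf.eventually_gt_atTop M)).exists
  exact ((le_abs_self _).trans (hM t ht)).not_gt hlt

theorem not_tendsto_atBot_of_abs_le {f : ℝ → ℝ} {t₀ M : ℝ} (hM : ∀ t ≥ t₀, |f t| ≤ M) :
    ¬Tendsto f atTop atBot := fun hf => by
  obtain ⟨t, ht, hlt⟩ := ((eventually_ge_atTop t₀).and (hf.eventually_lt_atBot (-M))).exists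
  exact (neg_le_of_abs_le (hM t ht)).not_gt hlt

/-- The first order system `(Θ, Θ')' = (Θ', A Θ)` equivalent to `Θ'' = A Θ`. -/
def phaseField (A : ℝ → ℝ) (t : ℝ) (p : ℝ × ℝ) : ℝ × ℝ := (p.2, A t * p.1)

theorem lipschitzWith_phaseField (A : ℝ → ℝ) (t : ℝ) :
    LipschitzWith (max 1 ‖A t‖₊) (phaseField A t) :=
  LipschitzWith.prod_snd.prodMk <| by
    simpa [Function.comp_def] using (lipschitzWith_smul (β := ℝ) (A t)).comp LipschitzWith.prod_fst

theorem exists_lipschitzWith_phaseField {t₀ : ℝ} {A : ℝ → ℝ} (hAc : ContinuousOn A (Ici t₀))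
    (T : ℝ) : ∃ K, ∀ t ∈ Icc t₀ T, LipschitzWith K (phaseField A t) := by
  obtain ⟨C, hC⟩ := isCompact_Icc.exists_bound_of_continuousOn (hAc.mono Icc_subset_Ici_self)
  refine ⟨max 1 C.toNNReal, fun t ht => (lipschitzWith_phaseField A t).weaken ?_⟩
  exact max_le_max le_rfl (NNReal.coe_le_coe.1 ((hC t ht).trans (Real.le_coe_toNNReal C)))

structure IsDivergentCoeff (t₀ : ℝ) (A : ℝ → ℝ) : Prop where
  continuousOn : ContinuousOn A (Ici t₀)
  nonneg : ∀ t ≥ t₀, 0 ≤ A t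
  lintegral_eq_top : ∫⁻ t in Ici t₀, ENNReal.ofReal (A t) = ⊤

namespace IsSolOn

variable {t₀ M : ℝ} {A Θ Θ' Ψ Ψ' : ℝ → ℝ}

theorem continuousOn (h : IsSolOn t₀ A Θ Θ') : ContinuousOn Θ (Ici t₀) :=
  fun t ht => (h t ht).1.continuousWithinAt

theorem continuousOn_deriv (h : IsSolOn t₀ A Θ Θ') : ContinuousOn Θ' (Ici t₀) :=
  fun t ht => (h t ht).2.continuousWithinAt

theorem hasDerivAt (h : IsSolOn t₀ A Θ Θ') {t : ℝ} (ht : t₀ < t) : HasDerivAt Θ (Θ' t) t :=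
  (h t ht.le).1.hasDerivAt (Ici_mem_nhds ht)

theorem hasDerivAt_deriv (h : IsSolOn t₀ A Θ Θ') {t : ℝ} (ht : t₀ < t) :
    HasDerivAt Θ' (A t * Θ t) t :=
  (h t ht.le).2.hasDerivAt (Ici_mem_nhds ht)

theorem neg (h : IsSolOn t₀ A Θ Θ') : IsSolOn t₀ A (fun t => -Θ t) (fun t => -Θ' t) :=
  fun t ht => ⟨(h t ht).1.neg, (h t ht).2.neg.congr_deriv (mul_neg _ _).symm⟩

theorem sub (h : IsSolOn t₀ A Θ Θ') (h' : IsSolOn t₀ A Ψ Ψ') :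
    IsSolOn t₀ A (fun t => Θ t - Ψ t) (fun t => Θ' t - Ψ' t) :=
  fun t ht => ⟨(h t ht).1.sub (h' t ht).1,
    ((h t ht).2.sub (h' t ht).2).congr_deriv (mul_sub _ _ _).symm⟩

theorem hasDerivWithinAt_phase (h : IsSolOn t₀ A Θ Θ') {t : ℝ} (ht : t₀ ≤ t) :
    HasDerivWithinAt (fun t => (Θ t, Θ' t)) (phaseField A t (Θ t, Θ' t)) (Ici t) t :=
  ((h t ht).1.prodMk (h t ht).2).mono (Ici_subset_Ici.2 ht)

theorem eq_zero_of_eq_zero (hAc : ContinuousOn A (Ici t₀)) (h : IsSolOn t₀ A Θ Θ') {s : ℝ}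
    (hs : t₀ ≤ s) (h0 : Θ s = 0) (h0' : Θ' s = 0) {t : ℝ} (ht : t₀ ≤ t) : Θ t = 0 := by
  obtain ⟨K, hK⟩ := exists_lipschitzWith_phaseField hAc (max s t)
  have hLip : ∀ u ∈ Icc t₀ (max s t), LipschitzOnWith K (phaseField A u) univ :=
    fun u hu => (hK u hu).lipschitzOnWith
  have hcont : ContinuousOn (fun u => (Θ u, Θ' u)) (Ici t₀) :=
    h.continuousOn.prodMk h.continuousOn_deriv
  have hzero : ∀ u, HasDerivAt (fun _ => (0 : ℝ × ℝ)) (phaseField A u 0) u := fun u =>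
    (hasDerivAt_const u (0 : ℝ × ℝ)).congr_deriv (by ext <;> simp [phaseField])
  have hs0 : (Θ s, Θ' s) = 0 := by rw [h0, h0', Prod.mk_zero_zero]
  rcases le_total t s with hts | hst
  · have := ODE_solution_unique_of_mem_Icc_left (s := fun _ => univ)
      (fun u hu => hLip u ⟨hu.1.le, hu.2.trans (le_max_left s t)⟩)
      (hcont.mono Icc_subset_Ici_self)
      (fun u hu => ((h.hasDerivAt hu.1).prodMk (h.hasDerivAt_deriv hu.1)).hasDerivWithinAt)
      (fun _ _ => mem_univ _) continuousOn_const (fun u _ => (hzero u).hasDerivWithinAt)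
      (fun _ _ => mem_univ _) hs0 ⟨ht, hts⟩
    simpa using congrArg Prod.fst this
  · have := ODE_solution_unique_of_mem_Icc_right (s := fun _ => univ)
      (fun u hu => hLip u ⟨hs.trans hu.1, hu.2.le.trans (le_max_right s t)⟩)
      (hcont.mono fun u hu => hs.trans hu.1)
      (fun u hu => h.hasDerivWithinAt_phase (hs.trans hu.1))
      (fun _ _ => mem_univ _) continuousOn_const (fun u _ => (hzero u).hasDerivWithinAt)
      (fun _ _ => mem_univ _) hs0 ⟨hst, le_rfl⟩
    simpa using congrArg Prod.fst this

theorem eqOn_of_eq (hAc : ContinuousOn A (Ici t₀)) (h : IsSolOn t₀ A Θ Θ')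
    (h' : IsSolOn t₀ A Ψ Ψ') (hv : Θ t₀ = Ψ t₀) (hv' : Θ' t₀ = Ψ' t₀) : EqOn Θ Ψ (Ici t₀) :=
  fun _ ht => sub_eq_zero.1 <|
    (h.sub h').eq_zero_of_eq_zero hAc le_rfl (sub_eq_zero.2 hv) (sub_eq_zero.2 hv') ht

theorem exists_dist_le_mul_dist (hAc : ContinuousOn A (Ici t₀)) {s : ℝ} (hs : t₀ ≤ s) :
    ∃ C > 0, ∀ Θ Θ' Ψ Ψ' : ℝ → ℝ, IsSolOn t₀ A Θ Θ' → IsSolOn t₀ A Ψ Ψ' →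
      dist (Θ s, Θ' s) (Ψ s, Ψ' s) ≤ C * dist (Θ t₀, Θ' t₀) (Ψ t₀, Ψ' t₀) := by
  obtain ⟨K, hK⟩ := exists_lipschitzWith_phaseField hAc s
  refine ⟨Real.exp (K * (s - t₀)), Real.exp_pos _, fun Θ Θ' Ψ Ψ' h h' => ?_⟩
  rw [mul_comm]
  exact dist_le_of_trajectories_ODE_of_mem (s := fun _ => univ)
    (fun u hu => (hK u (Ico_subset_Icc_self hu)).lipschitzOnWith)
    ((h.continuousOn.prodMk h.continuousOn_deriv).mono Icc_subset_Ici_self)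
    (fun u hu => h.hasDerivWithinAt_phase hu.1) (fun _ _ => mem_univ _)
    ((h'.continuousOn.prodMk h'.continuousOn_deriv).mono Icc_subset_Ici_self)
    (fun u hu => h'.hasDerivWithinAt_phase hu.1) (fun _ _ => mem_univ _) le_rfl s ⟨hs, le_rfl⟩

theorem deriv_eq_add_integral (hAc : ContinuousOn A (Ici t₀)) (h : IsSolOn t₀ A Θ Θ') {s t : ℝ}
    (hs : t₀ ≤ s) (hst : s ≤ t) : Θ' t = Θ' s + ∫ u in s..t, A u * Θ u := by
  rw [intervalIntegral.integral_eq_sub_of_hasDeriv_right_of_le hst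
    (h.continuousOn_deriv.mono fun u hu => hs.trans hu.1)
    (fun u hu => (h.hasDerivAt_deriv (hs.trans_lt hu.1)).hasDerivWithinAt)
    ((hAc.mul h.continuousOn).intervalIntegrable_of_Ici hs (hs.trans hst))]
  ring

theorem monotoneOn_mul_deriv (hA₀ : ∀ t ≥ t₀, 0 ≤ A t) (h : IsSolOn t₀ A Θ Θ') :
    MonotoneOn (fun t => Θ t * Θ' t) (Ici t₀) := by
  refine monotoneOn_of_hasDerivWithinAt_nonneg (f' := fun t => Θ' t * Θ' t + Θ t * (A t * Θ t))
    (convex_Ici t₀)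
    (h.continuousOn.mul h.continuousOn_deriv) (fun t ht => ?_) (fun t ht => ?_)
  · rw [interior_Ici] at ht
    exact ((h.hasDerivAt ht).mul (h.hasDerivAt_deriv ht)).hasDerivWithinAt
  · rw [interior_Ici] at ht
    have := mul_nonneg (hA₀ t ht.le) (mul_self_nonneg (Θ t))
    nlinarith [mul_self_nonneg (Θ' t)]

theorem hasDerivAt_sq (h : IsSolOn t₀ A Θ Θ') {t : ℝ} (ht : t₀ < t) :
    HasDerivAt (fun t => Θ t ^ 2) (2 * (Θ t * Θ' t)) t :=
  ((h.hasDerivAt ht).pow 2).congr_deriv (by ring)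

theorem monotoneOn_sq (h : IsSolOn t₀ A Θ Θ') {s : ℝ} (hs : t₀ ≤ s)
    (hE : ∀ t ≥ s, 0 ≤ Θ t * Θ' t) : MonotoneOn (fun t => Θ t ^ 2) (Ici s) :=
  monotoneOn_of_hasDerivWithinAt_nonneg (convex_Ici s)
    (h.continuousOn.pow 2 |>.mono (Ici_subset_Ici.2 hs))
    (fun t ht => (h.hasDerivAt_sq (hs.trans_lt (by simpa using ht))).hasDerivWithinAt)
    (fun t ht => mul_nonneg zero_le_two (hE t (by simpa using ht : s < t).le))

theorem abs_le_of_mul_deriv_nonpos (h : IsSolOn t₀ A Θ Θ') (hE : ∀ t ≥ t₀, Θ t * Θ' t ≤ 0) :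
    ∀ t ≥ t₀, |Θ t| ≤ |Θ t₀| := by
  have hanti : AntitoneOn (fun t => Θ t ^ 2) (Ici t₀) :=
    antitoneOn_of_hasDerivWithinAt_nonpos (convex_Ici t₀) (h.continuousOn.pow 2)
      (fun t ht => (h.hasDerivAt_sq (by simpa using ht)).hasDerivWithinAt)
      (fun t ht => mul_nonpos_of_nonneg_of_nonpos zero_le_two
        (hE t (by simpa using ht : t₀ < t).le))
  exact fun t ht => sq_le_sq.1 (hanti self_mem_Ici ht ht)

theorem tendsto_deriv_atTop (hA : IsDivergentCoeff t₀ A) (h : IsSolOn t₀ A Θ Θ') {s m : ℝ}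
    (hs : t₀ ≤ s) (hm : 0 < m) (hΘ : ∀ t ≥ s, m ≤ Θ t) : Tendsto Θ' atTop atTop := by
  have hint : Tendsto (fun t => ∫ u in s..t, A u) atTop atTop := by
    refine (tendsto_atTop_add_const_right _ (-∫ u in t₀..s, A u)
      (tendsto_intervalIntegral_atTop_of_setLIntegral_eq_top hA.continuousOn hA.nonneg
        hA.lintegral_eq_top)).congr' ?_
    filter_upwards [eventually_ge_atTop t₀] with t ht
    rw [← sub_eq_add_neg, intervalIntegral.integral_interval_sub_left
      (hA.continuousOn.intervalIntegrable_of_Ici le_rfl ht)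
      (hA.continuousOn.intervalIntegrable_of_Ici le_rfl hs)]
  refine tendsto_atTop_mono' atTop ?_
    (tendsto_atTop_add_const_left _ (Θ' s) (hint.const_mul_atTop hm))
  filter_upwards [eventually_ge_atTop s] with t hst
  rw [h.deriv_eq_add_integral hA.continuousOn hs hst, ← intervalIntegral.integral_const_mul]
  gcongr
  refine intervalIntegral.integral_mono_on hst
    ((hA.continuousOn.intervalIntegrable_of_Ici hs (hs.trans hst)).const_mul m)
    ((hA.continuousOn.mul h.continuousOn).intervalIntegrable_of_Ici hs (hs.trans hst))
    fun u hu => ?_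
  rw [mul_comm]
  exact mul_le_mul_of_nonneg_left (hΘ u hu.1) (hA.nonneg u (hs.trans hu.1))

theorem tendsto_atTop_of_pos_of_deriv_nonneg (hA : IsDivergentCoeff t₀ A)
    (h : IsSolOn t₀ A Θ Θ') {s : ℝ} (hs : t₀ ≤ s) (hpos : 0 < Θ s) (hslope : 0 ≤ Θ' s) :
    Tendsto Θ atTop atTop := by
  have hE : ∀ t ≥ s, 0 ≤ Θ t * Θ' t := fun t ht =>
    (mul_nonneg hpos.le hslope).trans (h.monotoneOn_mul_deriv hA.nonneg hs (hs.trans ht) ht)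
  have hsq : ∀ t ≥ s, Θ s ^ 2 ≤ Θ t ^ 2 := fun t ht => h.monotoneOn_sq hs hE self_mem_Ici ht ht
  have hstays_pos : ∀ t ≥ s, 0 < Θ t := by
    intro t ht
    by_contra! hneg
    obtain ⟨z, hz, hz0⟩ := intermediate_value_Icc' ht
      (h.continuousOn.mono fun u hu => hs.trans hu.1) ⟨hneg, hpos.le⟩
    have := hsq z hz.1
    rw [hz0] at this
    nlinarith
  have hge : ∀ t ≥ s, Θ s ≤ Θ t := fun t ht =>
    (pow_le_pow_iff_left₀ hpos.le (hstays_pos t ht).le two_ne_zero).1 (hsq t ht)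
  exact tendsto_atTop_of_hasDerivAt_of_tendsto_atTop (fun t ht => h.hasDerivAt (hs.trans_lt ht))
    (h.tendsto_deriv_atTop hA hs hpos hge)

theorem tendsto_atBot_of_neg_of_deriv_nonpos (hA : IsDivergentCoeff t₀ A)
    (h : IsSolOn t₀ A Θ Θ') {s : ℝ} (hs : t₀ ≤ s) (hneg : Θ s < 0) (hslope : Θ' s ≤ 0) :
    Tendsto Θ atTop atBot :=
  tendsto_neg_atTop_iff.1 <| h.neg.tendsto_atTop_of_pos_of_deriv_nonneg hA hs
    (neg_pos.2 hneg) (neg_nonneg.2 hslope)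

theorem tendsto_atTop_of_eq_zero_of_deriv_pos (hA : IsDivergentCoeff t₀ A)
    (h : IsSolOn t₀ A Θ Θ') {s : ℝ} (hs : t₀ ≤ s) (hzero : Θ s = 0) (hslope : 0 < Θ' s) :
    Tendsto Θ atTop atTop := by
  obtain ⟨t, hpos, hst⟩ : ∃ t, 0 < Θ t ∧ s < t := by
    have hslope_lim := (hasDerivWithinAt_iff_tendsto_slope' (show s ∉ Ioi s from lt_irrefl s)).1
      ((h s hs).1.mono (Ioi_subset_Ici hs))
    obtain ⟨t, ht, hst⟩ := ((hslope_lim.eventually (lt_mem_nhds hslope)).and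
      self_mem_nhdsWithin).exists
    rw [slope_def_field, hzero, sub_zero] at ht
    exact ⟨t, (div_pos_iff_of_pos_right (sub_pos.2 hst)).1 ht, hst⟩
  have hE : Θ s * Θ' s ≤ Θ t * Θ' t := h.monotoneOn_mul_deriv hA.nonneg hs (hs.trans hst.le) hst.le
  rw [hzero, zero_mul] at hE
  exact h.tendsto_atTop_of_pos_of_deriv_nonneg hA (hs.trans hst.le) hpos
    (nonneg_of_mul_nonneg_right hE hpos)

theorem tendsto_atBot_of_eq_zero_of_deriv_neg (hA : IsDivergentCoeff t₀ A)
    (h : IsSolOn t₀ A Θ Θ') {s : ℝ} (hs : t₀ ≤ s) (hzero : Θ s = 0) (hslope : Θ' s < 0) :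
    Tendsto Θ atTop atBot :=
  tendsto_neg_atTop_iff.1 <| h.neg.tendsto_atTop_of_eq_zero_of_deriv_pos hA hs
    (neg_eq_zero.2 hzero) (neg_pos.2 hslope)

theorem tendsto_of_mul_deriv_pos (hA : IsDivergentCoeff t₀ A) (h : IsSolOn t₀ A Θ Θ') {s : ℝ}
    (hs : t₀ ≤ s) (hE : 0 < Θ s * Θ' s) : Tendsto Θ atTop atTop ∨ Tendsto Θ atTop atBot := by
  rcases pos_and_pos_or_neg_and_neg_of_mul_pos hE with ⟨hpos, hslope⟩ | ⟨hneg, hslope⟩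
  · exact .inl (h.tendsto_atTop_of_pos_of_deriv_nonneg hA hs hpos hslope.le)
  · exact .inr (h.tendsto_atBot_of_neg_of_deriv_nonpos hA hs hneg hslope.le)

theorem bounded_or_tendsto (hA : IsDivergentCoeff t₀ A) (h : IsSolOn t₀ A Θ Θ') :
    (∃ M, ∀ t ≥ t₀, |Θ t| ≤ M) ∨ Tendsto Θ atTop atTop ∨ Tendsto Θ atTop atBot := by
  by_cases hE : ∃ s ≥ t₀, 0 < Θ s * Θ' s
  · obtain ⟨s, hs, hE⟩ := hE
    exact .inr (h.tendsto_of_mul_deriv_pos hA hs hE)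
  · push Not at hE
    exact .inl ⟨_, h.abs_le_of_mul_deriv_nonpos hE⟩

theorem exists_pos_of_tendsto_atTop (hA : IsDivergentCoeff t₀ A) (h : IsSolOn t₀ A Θ Θ')
    (htop : Tendsto Θ atTop atTop) : ∃ s ≥ t₀, 0 < Θ s ∧ 0 < Θ' s := by
  obtain ⟨s, hs, hE⟩ : ∃ s ≥ t₀, 0 < Θ s * Θ' s := by
    by_contra! hE
    exact not_tendsto_atTop_of_abs_le (h.abs_le_of_mul_deriv_nonpos hE) htop
  rcases pos_and_pos_or_neg_and_neg_of_mul_pos hE with hpos | ⟨hneg, hslope⟩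
  · exact ⟨s, hs, hpos⟩
  · exact absurd htop <| (h.tendsto_atBot_of_neg_of_deriv_nonpos hA hs hneg
      hslope.le).not_tendsto disjoint_atBot_atTop

theorem pos_of_abs_le (hA : IsDivergentCoeff t₀ A) (h : IsSolOn t₀ A Θ Θ')
    (hM : ∀ t ≥ t₀, |Θ t| ≤ M) (hpos : 0 < Θ t₀) : ∀ t ≥ t₀, 0 < Θ t := by
  intro t ht
  by_contra! hle
  obtain ⟨z, hz, hzero⟩ := intermediate_value_Icc' ht (h.continuousOn.mono Icc_subset_Ici_self)
    ⟨hle, hpos.le⟩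
  have hslope : Θ' z = 0 := by
    rcases lt_trichotomy (Θ' z) 0 with hneg | hslope | hpos
    · exact absurd (h.tendsto_atBot_of_eq_zero_of_deriv_neg hA hz.1 hzero hneg)
        (not_tendsto_atBot_of_abs_le hM)
    · exact hslope
    · exact absurd (h.tendsto_atTop_of_eq_zero_of_deriv_pos hA hz.1 hzero hpos)
        (not_tendsto_atTop_of_abs_le hM)
  exact hpos.ne' (h.eq_zero_of_eq_zero hA.continuousOn hz.1 hzero hslope le_rfl)

theorem deriv_neg_of_abs_le (hA : IsDivergentCoeff t₀ A) (h : IsSolOn t₀ A Θ Θ')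
    (hM : ∀ t ≥ t₀, |Θ t| ≤ M) (hpos : 0 < Θ t₀) : ∀ t ≥ t₀, Θ' t < 0 := fun t ht => by
  by_contra! hslope
  exact not_tendsto_atTop_of_abs_le hM <| h.tendsto_atTop_of_pos_of_deriv_nonneg hA ht
    (h.pos_of_abs_le hA hM hpos t ht) hslope

theorem strictAntiOn_of_abs_le (hA : IsDivergentCoeff t₀ A) (h : IsSolOn t₀ A Θ Θ')
    (hM : ∀ t ≥ t₀, |Θ t| ≤ M) (hpos : 0 < Θ t₀) : StrictAntiOn Θ (Ici t₀) :=
  strictAntiOn_of_hasDerivWithinAt_neg (convex_Ici t₀) h.continuousOn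
    (fun _ ht => (h.hasDerivAt (by simpa using ht)).hasDerivWithinAt)
    (fun t ht => h.deriv_neg_of_abs_le hA hM hpos t (by simpa using ht : t₀ < t).le)

theorem tendsto_zero_of_abs_le (hA : IsDivergentCoeff t₀ A) (h : IsSolOn t₀ A Θ Θ')
    (hM : ∀ t ≥ t₀, |Θ t| ≤ M) (hpos : 0 < Θ t₀) : Tendsto Θ atTop (𝓝 0) := by
  refine tendsto_order.2 ⟨fun ε hε => ?_, fun ε hε => ?_⟩
  · filter_upwards [eventually_ge_atTop t₀] with t ht
    exact hε.trans (h.pos_of_abs_le hA hM hpos t ht)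
  · obtain ⟨T, hT, hlt⟩ : ∃ T ≥ t₀, Θ T < ε := by
      by_contra! hge
      obtain ⟨t, ht, hslope⟩ := ((eventually_ge_atTop t₀).and
        ((h.tendsto_deriv_atTop hA le_rfl hε hge).eventually_ge_atTop 0)).exists
      exact (h.deriv_neg_of_abs_le hA hM hpos t ht).not_ge hslope
    filter_upwards [eventually_ge_atTop T] with t ht
    exact lt_of_le_of_lt ((h.strictAntiOn_of_abs_le hA hM hpos).antitoneOn hT
      (hT.trans ht) ht) hlt

theorem deriv_le_of_deriv_nonpos (hA : IsDivergentCoeff t₀ A) (h : IsSolOn t₀ A Θ Θ') {c : ℝ}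
    (hc : t₀ ≤ c) (hslope : ∀ u ∈ Ioo t₀ c, Θ' u ≤ 0) :
    Θ' c ≤ Θ' t₀ + Θ t₀ * ∫ u in t₀..c, A u := by
  have hanti : AntitoneOn Θ (Icc t₀ c) :=
    antitoneOn_of_hasDerivWithinAt_nonpos (convex_Icc t₀ c)
      (h.continuousOn.mono Icc_subset_Ici_self)
      (fun u hu => (h.hasDerivAt (interior_Icc (a := t₀) ▸ hu).1).hasDerivWithinAt)
      (fun u hu => hslope u (interior_Icc (a := t₀) ▸ hu))
  rw [h.deriv_eq_add_integral hA.continuousOn le_rfl hc, ← intervalIntegral.integral_const_mul]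
  gcongr
  refine intervalIntegral.integral_mono_on hc
    ((hA.continuousOn.mul h.continuousOn).intervalIntegrable_of_Ici le_rfl hc)
    ((hA.continuousOn.intervalIntegrable_of_Ici le_rfl hc).const_mul _) fun u hu => ?_
  rw [mul_comm]
  exact mul_le_mul_of_nonneg_right (hanti (left_mem_Icc.2 hc) hu hu.1) (hA.nonneg u hu.1)

theorem deriv_le_on_Icc_of_neg (hA : IsDivergentCoeff t₀ A) (h : IsSolOn t₀ A Θ Θ') {T : ℝ}
    (hpos : 0 ≤ Θ t₀) (hγ : Θ' t₀ + Θ t₀ * ∫ u in t₀..T, A u < 0) :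
    ∀ c ∈ Icc t₀ T, Θ' c ≤ Θ' t₀ + Θ t₀ * ∫ u in t₀..T, A u := by
  have hbound : ∀ c ∈ Icc t₀ T, (∀ u ∈ Ioo t₀ c, Θ' u ≤ 0) →
      Θ' c ≤ Θ' t₀ + Θ t₀ * ∫ u in t₀..T, A u := by
    intro c hc hslope
    refine (h.deriv_le_of_deriv_nonpos hA hc.1 hslope).trans ?_
    gcongr
    exact intervalIntegral.integral_mono_interval le_rfl hc.1 hc.2
      (ae_restrict_of_forall_mem measurableSet_Ioc fun u hu => hA.nonneg u hu.1.le)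
      (hA.continuousOn.intervalIntegrable_of_Ici le_rfl (hc.1.trans hc.2))
  -- the first time the slope becomes nonnegative would already have a negative slope
  have hneg : ∀ c ∈ Icc t₀ T, Θ' c < 0 := by
    by_contra! hex
    obtain ⟨c₁, hc₁, hc₁'⟩ := hex
    set S := Icc t₀ T ∩ Θ' ⁻¹' Ici 0
    have hS : IsClosed S := (h.continuousOn_deriv.mono Icc_subset_Ici_self
      ).preimage_isClosed_of_isClosed isClosed_Icc isClosed_Ici
    have hSbdd : BddBelow S := bddBelow_Icc.mono inter_subset_left
    have hc := hS.csInf_mem ⟨c₁, hc₁, hc₁'⟩ hSbdd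
    refine (hbound _ hc.1 fun u hu => ?_).not_gt (hγ.trans_le hc.2)
    exact le_of_lt <| not_le.1 fun h0 =>
      notMem_of_lt_csInf hu.2 hSbdd ⟨⟨hu.1.le, hu.2.le.trans hc.1.2⟩, h0⟩
  exact fun c hc => hbound c hc fun u hu => (hneg u ⟨hu.1.le, hu.2.le.trans hc.2⟩).le

theorem tendsto_atBot_of_deriv_lt (hA : IsDivergentCoeff t₀ A) (h : IsSolOn t₀ A Θ Θ')
    (hpos : 0 ≤ Θ t₀) (hslope : Θ' t₀ + Θ t₀ * (1 + ∫ u in t₀..t₀ + 1, A u) < 0) :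
    Tendsto Θ atTop atBot := by
  set γ := Θ' t₀ + Θ t₀ * ∫ u in t₀..t₀ + 1, A u
  have hγ : γ < -Θ t₀ := by linarith [mul_add (Θ t₀) 1 (∫ u in t₀..t₀ + 1, A u)]
  have hle := h.deriv_le_on_Icc_of_neg hA hpos (hγ.trans_le (by linarith))
  have hderiv : ∀ u ∈ interior (Icc t₀ (t₀ + 1)), HasDerivAt Θ (Θ' u) u :=
    fun u hu => h.hasDerivAt (interior_Icc (a := t₀) ▸ hu).1
  have hend : Θ (t₀ + 1) - Θ t₀ ≤ γ * (t₀ + 1 - t₀) :=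
    (convex_Icc t₀ (t₀ + 1)).image_sub_le_mul_sub_of_deriv_le
      (h.continuousOn.mono Icc_subset_Ici_self)
      (fun u hu => (hderiv u hu).differentiableAt.differentiableWithinAt)
      (fun u hu => (hderiv u hu).deriv ▸ hle u (interior_subset hu))
      t₀ (left_mem_Icc.2 (by linarith)) (t₀ + 1) (right_mem_Icc.2 (by linarith)) (by linarith)
  exact h.tendsto_atBot_of_neg_of_deriv_nonpos hA (by linarith) (by linarith)
    ((hle _ (right_mem_Icc.2 (by linarith))).trans (by linarith))

theorem tendsto_atTop_of_initial_slope_lt (hA : IsDivergentCoeff t₀ A) (h : IsSolOn t₀ A Θ Θ')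
    (h' : IsSolOn t₀ A Ψ Ψ') (hv : Θ t₀ = Ψ t₀) (hslope : Θ' t₀ < Ψ' t₀) {C : ℝ}
    (hC : ∀ᶠ t in atTop, C ≤ Θ t) : Tendsto Ψ atTop atTop :=
  (tendsto_atTop_add_left_of_le' atTop C hC <| (h'.sub h).tendsto_atTop_of_eq_zero_of_deriv_pos
    hA le_rfl (sub_eq_zero.2 hv.symm) (sub_pos.2 hslope)).congr fun t => by ring

theorem tendsto_atBot_of_initial_slope_lt (hA : IsDivergentCoeff t₀ A) (h : IsSolOn t₀ A Θ Θ')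
    (h' : IsSolOn t₀ A Ψ Ψ') (hv : Θ t₀ = Ψ t₀) (hslope : Θ' t₀ < Ψ' t₀) {C : ℝ}
    (hC : ∀ᶠ t in atTop, Ψ t ≤ C) : Tendsto Θ atTop atBot :=
  tendsto_neg_atTop_iff.1 <| h'.neg.tendsto_atTop_of_initial_slope_lt hA h.neg (neg_inj.2 hv.symm)
    (neg_lt_neg hslope) (C := -C) (hC.mono fun _ => neg_le_neg)

theorem exists_forall_tendsto_atTop (hA : IsDivergentCoeff t₀ A) (h : IsSolOn t₀ A Θ Θ')
    (htop : Tendsto Θ atTop atTop) :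
    ∃ δ > 0, ∀ Ψ Ψ' : ℝ → ℝ, IsSolOn t₀ A Ψ Ψ' →
      dist (Ψ t₀, Ψ' t₀) (Θ t₀, Θ' t₀) < δ → Tendsto Ψ atTop atTop := by
  obtain ⟨s, hs, hpos, hslope⟩ := h.exists_pos_of_tendsto_atTop hA htop
  obtain ⟨C, hC, hdist⟩ := exists_dist_le_mul_dist hA.continuousOn hs
  refine ⟨min (Θ s) (Θ' s) / C, by positivity, fun Ψ Ψ' h' hδ => ?_⟩
  have hclose : dist (Ψ s, Ψ' s) (Θ s, Θ' s) < min (Θ s) (Θ' s) :=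
    calc dist (Ψ s, Ψ' s) (Θ s, Θ' s) ≤ C * dist (Ψ t₀, Ψ' t₀) (Θ t₀, Θ' t₀) := hdist _ _ _ _ h' h
      _ < C * (min (Θ s) (Θ' s) / C) := mul_lt_mul_of_pos_left hδ hC
      _ = min (Θ s) (Θ' s) := mul_div_cancel₀ _ hC.ne'
  rw [Prod.dist_eq, max_lt_iff, lt_min_iff, lt_min_iff, Real.dist_eq, Real.dist_eq] at hclose
  exact h'.tendsto_atTop_of_pos_of_deriv_nonneg hA hs
    (by linarith [neg_abs_le (Ψ s - Θ s)]) (by linarith [neg_abs_le (Ψ' s - Θ' s)])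

theorem exists_forall_tendsto_atBot (hA : IsDivergentCoeff t₀ A) (h : IsSolOn t₀ A Θ Θ')
    (hbot : Tendsto Θ atTop atBot) :
    ∃ δ > 0, ∀ Ψ Ψ' : ℝ → ℝ, IsSolOn t₀ A Ψ Ψ' →
      dist (Ψ t₀, Ψ' t₀) (Θ t₀, Θ' t₀) < δ → Tendsto Ψ atTop atBot := by
  obtain ⟨δ, hδ, hstab⟩ := h.neg.exists_forall_tendsto_atTop hA (tendsto_neg_atTop_iff.2 hbot)
  refine ⟨δ, hδ, fun Ψ Ψ' h' hdist => tendsto_neg_atTop_iff.1 (hstab _ _ h'.neg ?_)⟩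
  rwa [← Prod.neg_mk, ← Prod.neg_mk, dist_neg_neg]

end IsSolOn

def slopesTendsto (t₀ : ℝ) (A : ℝ → ℝ) (a : ℝ) (l : Filter ℝ) : Set ℝ :=
  {b | ∃ Θ Θ', IsSolOn t₀ A Θ Θ' ∧ Θ t₀ = a ∧ Θ' t₀ = b ∧ Tendsto Θ atTop l}

section Slopes

variable {t₀ : ℝ} {A : ℝ → ℝ} {a : ℝ}

theorem bddAbove_slopesTendsto_atBot (hA : IsDivergentCoeff t₀ A) (ha : 0 < a) :
    BddAbove (slopesTendsto t₀ A a atBot) := by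
  refine ⟨0, fun b ⟨Θ, Θ', h, hv, hs, hbot⟩ => ?_⟩
  by_contra! hb
  exact (h.tendsto_atTop_of_pos_of_deriv_nonneg hA le_rfl (hv ▸ ha) (hs ▸ hb.le)).not_tendsto
    disjoint_atTop_atBot hbot

theorem bddBelow_slopesTendsto_atTop (hA : IsDivergentCoeff t₀ A) (ha : 0 ≤ a) :
    BddBelow (slopesTendsto t₀ A a atTop) := by
  refine ⟨-a * (1 + ∫ u in t₀..t₀ + 1, A u), fun b ⟨Θ, Θ', h, hv, hs, htop⟩ => ?_⟩
  by_contra! hb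
  refine (h.tendsto_atBot_of_deriv_lt hA (hv ▸ ha) ?_).not_tendsto disjoint_atBot_atTop htop
  rw [hv, hs]
  linarith

theorem disjoint_slopesTendsto_atTop_closure_atBot (hA : IsDivergentCoeff t₀ A) :
    Disjoint (slopesTendsto t₀ A a atTop) (closure (slopesTendsto t₀ A a atBot)) := by
  refine Set.disjoint_left.2 fun u ⟨Θ, Θ', h, hv, hs, htop⟩ hu => ?_
  obtain ⟨δ, hδ, hstab⟩ := h.exists_forall_tendsto_atTop hA htop
  obtain ⟨d, ⟨Ψ, Ψ', h', hv', hs', hbot⟩, hd⟩ := Metric.mem_closure_iff.1 hu δ hδ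
  refine (hstab Ψ Ψ' h' ?_).not_tendsto disjoint_atTop_atBot hbot
  rwa [Prod.dist_eq, hv, hv', hs, hs', dist_self, max_eq_right dist_nonneg, dist_comm]

theorem disjoint_closure_slopesTendsto_atTop_atBot (hA : IsDivergentCoeff t₀ A) :
    Disjoint (closure (slopesTendsto t₀ A a atTop)) (slopesTendsto t₀ A a atBot) := by
  refine Set.disjoint_right.2 fun d ⟨Θ, Θ', h, hv, hs, hbot⟩ hd => ?_
  obtain ⟨δ, hδ, hstab⟩ := h.exists_forall_tendsto_atBot hA hbot
  obtain ⟨u, ⟨Ψ, Ψ', h', hv', hs', htop⟩, hu⟩ := Metric.mem_closure_iff.1 hd δ hδ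
  refine (hstab Ψ Ψ' h' ?_).not_tendsto disjoint_atBot_atTop htop
  rwa [Prod.dist_eq, hv, hv', hs, hs', dist_self, max_eq_right dist_nonneg, dist_comm]

theorem slopesTendsto_atBot_lt_atTop (hA : IsDivergentCoeff t₀ A) :
    ∀ d ∈ slopesTendsto t₀ A a atBot, ∀ u ∈ slopesTendsto t₀ A a atTop, d < u := by
  intro d hd u hu
  obtain ⟨Θ, Θ', h, hv, hs, hbot⟩ := hd
  obtain ⟨Ψ, Ψ', h', hv', hs', htop⟩ := hu
  refine lt_of_le_of_ne (not_lt.1 fun hud => ?_) fun hdu =>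
    Set.disjoint_left.1 (disjoint_slopesTendsto_atTop_closure_atBot hA) ⟨Ψ, Ψ', h', hv', hs', htop⟩
      (subset_closure (hdu ▸ ⟨Θ, Θ', h, hv, hs, hbot⟩))
  exact (h'.tendsto_atTop_of_initial_slope_lt hA h (hv'.trans hv.symm) (hs'.trans_lt (hs ▸ hud))
    (htop.eventually_ge_atTop 0)).not_tendsto disjoint_atTop_atBot hbot

end Slopes

theorem exists_forall_lt_and_lt_of_disjoint_closure {D U : Set ℝ} (hD : BddAbove D)
    (hU : BddBelow U) (hDU : ∀ d ∈ D, ∀ u ∈ U, d < u) (hUD : Disjoint U (closure D))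
    (hUD' : Disjoint (closure U) D) : ∃ b, (∀ d ∈ D, d < b) ∧ ∀ u ∈ U, b < u := by
  rcases D.eq_empty_or_nonempty with rfl | hDne
  · exact ⟨sInf U - 1, by simp, fun u hu => by linarith [csInf_le hU hu]⟩
  rcases U.eq_empty_or_nonempty with rfl | hUne
  · exact ⟨sSup D + 1, fun d hd => by linarith [le_csSup hD hd], by simp⟩
  have hle : sSup D ≤ sInf U :=
    csSup_le hDne fun d hd => le_csInf hUne fun u hu => (hDU d hd u hu).le
  -- if the gap `[sSup D, sInf U]` is a single point, that point is in neither set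
  refine ⟨(sSup D + sInf U) / 2, fun d hd => ?_, fun u hu => ?_⟩
  · have hd_le := le_csSup hD hd
    refine lt_of_le_of_ne (by linarith) fun hmid => ?_
    have : d = sInf U := by linarith
    exact Set.disjoint_right.1 hUD' hd (this ▸ csInf_mem_closure hUne hU)
  · have hu_ge := csInf_le hU hu
    refine lt_of_le_of_ne (by linarith) fun hmid => ?_
    have : u = sSup D := by linarith
    exact Set.disjoint_left.1 hUD hu (this ▸ csSup_mem_closure hDne hD)

def IsCriticalSlope (t₀ : ℝ) (A : ℝ → ℝ) (a b : ℝ) : Prop :=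
  ∀ Θ Θ' : ℝ → ℝ, IsSolOn t₀ A Θ Θ' → Θ t₀ = a →
    (Θ' t₀ = b → ∃ M, ∀ t ≥ t₀, |Θ t| ≤ M) ∧ (b < Θ' t₀ → Tendsto Θ atTop atTop) ∧
      (Θ' t₀ < b → Tendsto Θ atTop atBot)

section CriticalSlope

variable {t₀ : ℝ} {A : ℝ → ℝ}

theorem IsSolOn.isCriticalSlope_of_abs_le {Θ₀ Θ₀' : ℝ → ℝ} {M : ℝ} (hA : IsDivergentCoeff t₀ A)
    (h₀ : IsSolOn t₀ A Θ₀ Θ₀') (hM : ∀ t ≥ t₀, |Θ₀ t| ≤ M) :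
    IsCriticalSlope t₀ A (Θ₀ t₀) (Θ₀' t₀) := by
  intro Θ Θ' h hv
  refine ⟨fun hs => ⟨M, fun t ht => h.eqOn_of_eq hA.continuousOn h₀ hv hs ht ▸ hM t ht⟩,
    fun hs => ?_, fun hs => ?_⟩
  · exact h₀.tendsto_atTop_of_initial_slope_lt hA h hv.symm hs
      (eventually_atTop.2 ⟨t₀, fun t ht => neg_le_of_abs_le (hM t ht)⟩)
  · exact h.tendsto_atBot_of_initial_slope_lt hA h₀ hv hs
      (eventually_atTop.2 ⟨t₀, fun t ht => (le_abs_self _).trans (hM t ht)⟩)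

theorem exists_isCriticalSlope_of_forall_unbounded {a : ℝ} (hA : IsDivergentCoeff t₀ A)
    (ha : 0 < a) (hunb : ∀ Θ Θ' : ℝ → ℝ, IsSolOn t₀ A Θ Θ' → Θ t₀ = a →
      ¬∃ M, ∀ t ≥ t₀, |Θ t| ≤ M) :
    ∃ b, IsCriticalSlope t₀ A a b := by
  obtain ⟨b, hbot, htop⟩ := exists_forall_lt_and_lt_of_disjoint_closure
    (bddAbove_slopesTendsto_atBot hA ha) (bddBelow_slopesTendsto_atTop hA ha.le)
    (slopesTendsto_atBot_lt_atTop hA) (disjoint_slopesTendsto_atTop_closure_atBot hA)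
    (disjoint_closure_slopesTendsto_atTop_atBot hA)
  refine ⟨b, fun Θ Θ' h hv => ?_⟩
  rcases h.bounded_or_tendsto hA with hbd | hΘtop | hΘbot
  · exact absurd hbd (hunb Θ Θ' h hv)
  · have hb := htop _ ⟨Θ, Θ', h, hv, rfl, hΘtop⟩
    exact ⟨fun hs => absurd hs hb.ne', fun _ => hΘtop, fun hs => absurd hs hb.not_gt⟩
  · have hb := hbot _ ⟨Θ, Θ', h, hv, rfl, hΘbot⟩
    exact ⟨fun hs => absurd hs hb.ne, fun hs => absurd hs hb.not_gt, fun _ => hΘbot⟩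

end CriticalSlope

theorem unique_initial_slope_for_bounded_solution_general (t₀ : ℝ)
    (A : ℝ → ℝ) (hAc : ContinuousOn A (Set.Ici t₀)) (hApos : ∀ t ≥ t₀, 0 < A t)
    (hAint : (∫⁻ t in Set.Ici t₀, ENNReal.ofReal (A t)) = ⊤)
    (a : ℝ) (ha : 0 < a) :
    ∃ b : ℝ,
      (∀ Θ Θ' : ℝ → ℝ, Θ t₀ = a → Θ' t₀ = b → IsSolOn t₀ A Θ Θ' →
        (∃ M, ∀ t ≥ t₀, |Θ t| ≤ M) ∧ (∀ t ≥ t₀, 0 < Θ t) ∧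
        StrictAntiOn Θ (Set.Ici t₀) ∧ Filter.Tendsto Θ Filter.atTop (nhds 0)) ∧
      (∀ b' : ℝ, b < b' → ∀ Θ Θ' : ℝ → ℝ, Θ t₀ = a → Θ' t₀ = b' → IsSolOn t₀ A Θ Θ' →
        Filter.Tendsto Θ Filter.atTop Filter.atTop) ∧
      (∀ b' : ℝ, b' < b → ∀ Θ Θ' : ℝ → ℝ, Θ t₀ = a → Θ' t₀ = b' → IsSolOn t₀ A Θ Θ' →
        Filter.Tendsto Θ Filter.atTop Filter.atBot) ∧
      (∀ b' : ℝ, ∀ Θ Θ' : ℝ → ℝ, Θ t₀ = a → Θ' t₀ = b' → IsSolOn t₀ A Θ Θ' →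
        (∃ M, ∀ t ≥ t₀, |Θ t| ≤ M) → b' = b) := by
  have hA : IsDivergentCoeff t₀ A := ⟨hAc, fun t ht => (hApos t ht).le, hAint⟩
  obtain ⟨b, hb⟩ : ∃ b, IsCriticalSlope t₀ A a b := by
    by_cases hbd : ∃ Θ Θ' : ℝ → ℝ, IsSolOn t₀ A Θ Θ' ∧ Θ t₀ = a ∧ ∃ M, ∀ t ≥ t₀, |Θ t| ≤ M
    · obtain ⟨Θ₀, Θ₀', h₀, rfl, M, hM⟩ := hbd
      exact ⟨_, h₀.isCriticalSlope_of_abs_le hA hM⟩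
    · exact exists_isCriticalSlope_of_forall_unbounded hA ha fun Θ Θ' h hv hM =>
        hbd ⟨Θ, Θ', h, hv, hM⟩
  refine ⟨b, fun Θ Θ' hv hs h => ?_, fun b' hb' Θ Θ' hv hs h => (hb Θ Θ' h hv).2.1 (hs ▸ hb'),
    fun b' hb' Θ Θ' hv hs h => (hb Θ Θ' h hv).2.2 (hs ▸ hb'), fun b' Θ Θ' hv hs h ⟨M, hM⟩ => ?_⟩
  · obtain ⟨M, hM⟩ := (hb Θ Θ' h hv).1 hs
    have hpos : 0 < Θ t₀ := hv ▸ ha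
    exact ⟨⟨M, hM⟩, h.pos_of_abs_le hA hM hpos, h.strictAntiOn_of_abs_le hA hM hpos,
      h.tendsto_zero_of_abs_le hA hM hpos⟩
  · rcases lt_trichotomy b' b with hlt | heq | hgt
    · exact absurd ((hb Θ Θ' h hv).2.2 (hs ▸ hlt)) (not_tendsto_atBot_of_abs_le hM)
    · exact heq
    · exact absurd ((hb Θ Θ' h hv).2.1 (hs ▸ hgt)) (not_tendsto_atTop_of_abs_le hM)

theorem unique_initial_slope_for_bounded_solution (t₀ : ℝ) (ht₀ : 0 ≤ t₀)
    (A : ℝ → ℝ) (hAc : ContinuousOn A (Set.Ici t₀)) (hApos : ∀ t ≥ t₀, 0 < A t)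
    (hAint : (∫⁻ t in Set.Ici t₀, ENNReal.ofReal (A t)) = ⊤)
    (a : ℝ) (ha : 0 < a) :
    ∃ b : ℝ,
      (∀ Θ Θ' : ℝ → ℝ, Θ t₀ = a → Θ' t₀ = b → IsSolOn t₀ A Θ Θ' →
        (∃ M, ∀ t ≥ t₀, |Θ t| ≤ M) ∧ (∀ t ≥ t₀, 0 < Θ t) ∧
        StrictAntiOn Θ (Set.Ici t₀) ∧ Filter.Tendsto Θ Filter.atTop (nhds 0)) ∧
      (∀ b' : ℝ, b < b' → ∀ Θ Θ' : ℝ → ℝ, Θ t₀ = a → Θ' t₀ = b' → IsSolOn t₀ A Θ Θ' →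
        Filter.Tendsto Θ Filter.atTop Filter.atTop) ∧
      (∀ b' : ℝ, b' < b → ∀ Θ Θ' : ℝ → ℝ, Θ t₀ = a → Θ' t₀ = b' → IsSolOn t₀ A Θ Θ' →
        Filter.Tendsto Θ Filter.atTop Filter.atBot) ∧
      (∀ b' : ℝ, ∀ Θ Θ' : ℝ → ℝ, Θ t₀ = a → Θ' t₀ = b' → IsSolOn t₀ A Θ Θ' →
        (∃ M, ∀ t ≥ t₀, |Θ t| ≤ M) → b' = b) :=
  unique_initial_slope_for_bounded_solution_general t₀ A hAc hApos hAint a ha
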